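/- arXiv:2309.12014 — 3 statements merged into one kernel-verified Lean document; each statement's English description precedes it below -/
import Mathlib

section
/- Let ρ > 0, σ > 0, μ ∈ ℝ, ĉ, č > 0, let β > 0 and γ < 0 be the two roots of Q(χ) = (1/2)σ²χ² + μχ − ρ = 0, and set Ê = ((ĉ+č)/(2ρ²))·σ²γ²/(β−γ) and Ě = ((ĉ+č)/(2ρ²))·σ²β²/(β−γ). Define R(x) = −(č/ρ)(x + μ/ρ) + Ê·e^{βx} for x < 0 and R(x) = (ĉ/ρ)(x + μ/ρ) + Ě·e^{γx} for x ≥ 0. Then R is twice continuously differentiable on ℝ and satisfies (1/2)σ²R''(x) + μR'(x) − ρR(x) + c(x) = 0 for every x ∈ ℝ, where c(x) = ĉ·x for x ≥ 0 and c(x) = −č·x for x < 0. -/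
open Set

lemma hd_piece (a b E k : ℝ) (x : ℝ) :
    HasDerivAt (fun x : ℝ => a * (x + b) + E * Real.exp (k * x))
      (a + E * k * Real.exp (k * x)) x := by
  have h1 : HasDerivAt (fun x : ℝ => a * (x + b)) a x := by
    simpa using ((hasDerivAt_id x).add_const b).const_mul a
  have h2 : HasDerivAt (fun x : ℝ => Real.exp (k * x)) (Real.exp (k * x) * k) x := by
    simpa using ((hasDerivAt_id x).const_mul k).exp
  refine (h1.add (h2.const_mul E)).congr_deriv ?_
  ring

lemma hd_piece2 (a E k : ℝ) (x : ℝ) :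
    HasDerivAt (fun x : ℝ => a + E * Real.exp (k * x))
      (E * k * Real.exp (k * x)) x := by
  have h2 : HasDerivAt (fun x : ℝ => Real.exp (k * x)) (Real.exp (k * x) * k) x := by
    simpa using ((hasDerivAt_id x).const_mul k).exp
  refine ((h2.const_mul E).const_add a).congr_deriv ?_
  ring

lemma glue_hasDerivAt (f g f1 g1 : ℝ → ℝ)
    (hf : ∀ x, HasDerivAt f (f1 x) x) (hg : ∀ x, HasDerivAt g (g1 x) x)
    (h0 : f 0 = g 0) (h1 : f1 0 = g1 0) (x : ℝ) :
    HasDerivAt (fun y => if y < 0 then f y else g y) (if x < 0 then f1 x else g1 x) x := by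
  rcases lt_trichotomy x 0 with hx | hx | hx
  · rw [if_pos hx]
    apply (hf x).congr_of_eventuallyEq
    filter_upwards [Iio_mem_nhds hx] with y hy
    rw [if_pos (mem_Iio.mp hy)]
  · subst hx
    rw [if_neg (lt_irrefl 0)]
    have hIic : HasDerivWithinAt (fun y => if y < 0 then f y else g y) (g1 0) (Iic 0) 0 := by
      rw [← h1]
      apply ((hf 0).hasDerivWithinAt).congr
      · intro y hy
        rcases lt_or_eq_of_le (mem_Iic.mp hy) with h | h
        · rw [if_pos h]
        · subst h; rw [if_neg (lt_irrefl 0), h0]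
      · rw [if_neg (lt_irrefl 0), h0]
    have hIci : HasDerivWithinAt (fun y => if y < 0 then f y else g y) (g1 0) (Ici 0) 0 := by
      apply ((hg 0).hasDerivWithinAt).congr
      · intro y hy
        rw [if_neg (not_lt.mpr (mem_Ici.mp hy))]
      · rw [if_neg (lt_irrefl 0)]
    have := hIic.union hIci
    rwa [Iic_union_Ici, hasDerivWithinAt_univ] at this
  · rw [if_neg (not_lt.mpr hx.le)]
    apply (hg x).congr_of_eventuallyEq
    filter_upwards [Ioi_mem_nhds hx] with y hy
    rw [if_neg (not_lt.mpr (le_of_lt (mem_Ioi.mp hy)))]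

/-- The expected discounted holding cost R of the uncontrolled arithmetic Brownian motion,
defined piecewise with constants Ê, Ě determined by value-matching and smooth-pasting at 0,
is C² on ℝ and solves the inhomogeneous ODE (1/2)σ²R'' + μR' − ρR + c = 0, where
c(x) = ĉ·x for x ≥ 0 and c(x) = −č·x for x < 0. -/
theorem holding_cost_solves_ODE
    (ρ σ μ chat ccheck β γ : ℝ)
    (hρ : 0 < ρ) (hσ : 0 < σ) (hchat : 0 < chat) (hccheck : 0 < ccheck)
    (hβ : 0 < β) (hγ : γ < 0)
    (hβroot : (1 / 2) * σ ^ 2 * β ^ 2 + μ * β - ρ = 0)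
    (hγroot : (1 / 2) * σ ^ 2 * γ ^ 2 + μ * γ - ρ = 0) :
    let Ehat : ℝ := ((chat + ccheck) / (2 * ρ ^ 2)) * (σ ^ 2 * γ ^ 2 / (β - γ))
    let Echeck : ℝ := ((chat + ccheck) / (2 * ρ ^ 2)) * (σ ^ 2 * β ^ 2 / (β - γ))
    let R : ℝ → ℝ := fun x =>
      if x < 0 then -(ccheck / ρ) * (x + μ / ρ) + Ehat * Real.exp (β * x)
      else (chat / ρ) * (x + μ / ρ) + Echeck * Real.exp (γ * x)
    let c : ℝ → ℝ := fun x => if 0 ≤ x then chat * x else -ccheck * x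
    ContDiff ℝ 2 R ∧
    ∀ x : ℝ, (1 / 2) * σ ^ 2 * deriv (deriv R) x + μ * deriv R x - ρ * R x + c x = 0 := by
  intro Ehat Echeck R c
  have hβγ : β - γ ≠ 0 := sub_ne_zero.mpr (hγ.trans hβ).ne'
  have hρ' : ρ ≠ 0 := hρ.ne'
  have hfac1 : (β - γ) * (σ^2 * (β + γ) + 2*μ) = 0 := by
    linear_combination 2*hβroot - 2*hγroot
  have hfac2 : (β - γ) * (σ^2 * (β*γ) + 2*ρ) = 0 := by
    linear_combination 2*γ*hβroot - 2*β*hγroot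
  have hsum : σ^2 * (β + γ) = -(2*μ) := by
    rcases mul_eq_zero.mp hfac1 with h | h
    · exact absurd h hβγ
    · linarith
  have hprod : σ^2 * (β*γ) = -(2*ρ) := by
    rcases mul_eq_zero.mp hfac2 with h | h
    · exact absurd h hβγ
    · linarith
  have hE1 : Ehat = ((chat + ccheck) / (2 * ρ ^ 2)) * (σ ^ 2 * γ ^ 2 / (β - γ)) := rfl
  have hE2 : Echeck = ((chat + ccheck) / (2 * ρ ^ 2)) * (σ ^ 2 * β ^ 2 / (β - γ)) := rfl
  -- value matching
  have h0 : -(ccheck / ρ) * ((0:ℝ) + μ / ρ) + Ehat * Real.exp (β * 0)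
      = (chat / ρ) * ((0:ℝ) + μ / ρ) + Echeck * Real.exp (γ * 0) := by
    rw [hE1, hE2]; simp only [mul_zero, Real.exp_zero, zero_add, mul_one]
    field_simp
    linear_combination (-((chat+ccheck)*(β-γ))) * hsum
  -- smooth pasting
  have h1 : -(ccheck / ρ) + Ehat * β * Real.exp (β * 0)
      = chat / ρ + Echeck * γ * Real.exp (γ * 0) := by
    rw [hE1, hE2]; simp only [mul_zero, Real.exp_zero, mul_one]
    field_simp
    linear_combination (-((chat+ccheck)*(β-γ))) * hprod
  -- second derivative matching
  have h2 : Ehat * β * β * Real.exp (β * 0) = Echeck * γ * γ * Real.exp (γ * 0) := by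
    rw [hE1, hE2]; simp only [mul_zero, Real.exp_zero, mul_one]
    field_simp
  have hf : ∀ y : ℝ, HasDerivAt (fun x : ℝ => -(ccheck / ρ) * (x + μ / ρ) + Ehat * Real.exp (β * x))
      (-(ccheck / ρ) + Ehat * β * Real.exp (β * y)) y := fun y => hd_piece _ _ _ _ y
  have hg : ∀ y : ℝ, HasDerivAt (fun x : ℝ => (chat / ρ) * (x + μ / ρ) + Echeck * Real.exp (γ * x))
      (chat / ρ + Echeck * γ * Real.exp (γ * y)) y := fun y => hd_piece _ _ _ _ y
  have hf1 : ∀ y : ℝ, HasDerivAt (fun x : ℝ => -(ccheck / ρ) + Ehat * β * Real.exp (β * x))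
      (Ehat * β * β * Real.exp (β * y)) y := fun y => hd_piece2 _ _ _ y
  have hg1 : ∀ y : ℝ, HasDerivAt (fun x : ℝ => chat / ρ + Echeck * γ * Real.exp (γ * x))
      (Echeck * γ * γ * Real.exp (γ * y)) y := fun y => hd_piece2 _ _ _ y
  have hR1 : ∀ x : ℝ, HasDerivAt R
      (if x < 0 then -(ccheck / ρ) + Ehat * β * Real.exp (β * x)
        else chat / ρ + Echeck * γ * Real.exp (γ * x)) x :=
    fun x => glue_hasDerivAt _ _ _ _ hf hg h0 h1 x
  have hderR : deriv R = fun x =>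
      if x < 0 then -(ccheck / ρ) + Ehat * β * Real.exp (β * x)
      else chat / ρ + Echeck * γ * Real.exp (γ * x) :=
    funext fun x => (hR1 x).deriv
  have hD1 : ∀ x : ℝ, HasDerivAt (fun x =>
      if x < 0 then -(ccheck / ρ) + Ehat * β * Real.exp (β * x)
      else chat / ρ + Echeck * γ * Real.exp (γ * x))
      (if x < 0 then Ehat * β * β * Real.exp (β * x)
        else Echeck * γ * γ * Real.exp (γ * x)) x :=
    fun x => glue_hasDerivAt _ _ _ _ hf1 hg1 h1 h2 x
  have hderD : (deriv fun x =>
      if x < 0 then -(ccheck / ρ) + Ehat * β * Real.exp (β * x)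
      else chat / ρ + Echeck * γ * Real.exp (γ * x)) = fun x =>
      if x < 0 then Ehat * β * β * Real.exp (β * x)
      else Echeck * γ * γ * Real.exp (γ * x) :=
    funext fun x => (hD1 x).deriv
  have hcont : Continuous fun x : ℝ =>
      if x < 0 then Ehat * β * β * Real.exp (β * x)
      else Echeck * γ * γ * Real.exp (γ * x) := by
    have heq : (fun x : ℝ =>
        if x < 0 then Ehat * β * β * Real.exp (β * x)
        else Echeck * γ * γ * Real.exp (γ * x)) = fun x : ℝ =>
        if x ≤ 0 then Ehat * β * β * Real.exp (β * x)
        else Echeck * γ * γ * Real.exp (γ * x) := by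
      funext x
      rcases lt_trichotomy x 0 with hx | hx | hx
      · rw [if_pos hx, if_pos hx.le]
      · subst hx
        rw [if_neg (lt_irrefl 0), if_pos le_rfl]
        simpa using h2.symm
      · rw [if_neg (not_lt.mpr hx.le), if_neg (not_le.mpr hx)]
    rw [heq]
    exact Continuous.if_le (by fun_prop) (by fun_prop) continuous_id continuous_const
      (fun x hx => by rw [hx]; simpa using h2)
  constructor
  · rw [show (2 : WithTop ℕ∞) = (1 : WithTop ℕ∞) + 1 from rfl, contDiff_succ_iff_deriv]
    refine ⟨fun x => (hR1 x).differentiableAt, by simp, ?_⟩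
    rw [hderR, contDiff_one_iff_deriv]
    exact ⟨fun x => (hD1 x).differentiableAt, by rw [hderD]; exact hcont⟩
  · intro x
    rw [hderR, hderD]
    rcases lt_or_ge x 0 with hx | hx
    · have hRx : R x = -(ccheck / ρ) * (x + μ / ρ) + Ehat * Real.exp (β * x) := if_pos hx
      have hcx : c x = -ccheck * x := if_neg (not_le.mpr hx)
      rw [hRx, hcx]
      simp only [if_pos hx]
      field_simp
      linear_combination (2*ρ*Ehat*Real.exp (β*x)) * hβroot
    · have hRx : R x = (chat / ρ) * (x + μ / ρ) + Echeck * Real.exp (γ * x) := if_neg (not_lt.mpr hx)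
      have hcx : c x = chat * x := if_pos hx
      rw [hRx, hcx]
      simp only [if_neg (not_lt.mpr hx)]
      field_simp
      linear_combination (2*ρ*Echeck*Real.exp (γ*x)) * hγroot
end

section
/- Let ρ, σ > 0, μ ∈ ℝ, let β > 0 and γ < 0 be the two roots of Q(χ) = (1/2)σ²χ² + μχ − ρ = 0, let č > 0 and 0 < ℓ ≤ č/ρ, let Ê ∈ ℝ and x_L ∈ ℝ. Set R(x) = −(č/ρ)(x + μ/ρ) + Ê·e^{βx}, W = γ²e^{γx_L}·βe^{βx_L} − γe^{γx_L}·β²e^{βx_L}, A = [γ²e^{γx_L}(−ℓ − R'(x_L)) + γe^{γx_L}·R''(x_L)]/W, B = [−β²e^{βx_L}(−ℓ − R'(x_L)) − βe^{βx_L}·R''(x_L)]/W, and φ(x) = R(x) + A·e^{βx} + B·e^{γx}. Then φ'(x_L) = −ℓ, φ''(x_L) = 0, and for every x ∈ ℝ: φ''(x) = (č/ρ − ℓ)·β²γ²·(e^{γx_L + βx} − e^{βx_L + γx})/W. In particular φ''(x) ≥ 0 for all x ≥ x_L, so φ is convex on [x_L, ∞). -/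
lemma aux_hasDerivAt (a₀ a₁ E F p q : ℝ) (x : ℝ) :
    HasDerivAt (fun x => a₀ + a₁ * x + E * Real.exp (p * x) + F * Real.exp (q * x))
      (a₁ + E * p * Real.exp (p * x) + F * q * Real.exp (q * x)) x := by
  have h1 : HasDerivAt (fun y : ℝ => a₀ + a₁ * y) (a₁) x := by
    simpa using ((hasDerivAt_id x).const_mul a₁).const_add a₀
  have hp : HasDerivAt (fun y : ℝ => E * Real.exp (p * y)) (E * (Real.exp (p * x) * p)) x := by
    exact (((hasDerivAt_id x).const_mul p).exp.congr_deriv (by simp only [id_eq]; ring)).const_mul E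
  have hq : HasDerivAt (fun y : ℝ => F * Real.exp (q * y)) (F * (Real.exp (q * x) * q)) x := by
    exact (((hasDerivAt_id x).const_mul q).exp.congr_deriv (by simp only [id_eq]; ring)).const_mul F
  exact ((h1.add hp).add hq).congr_deriv (by ring)

lemma aux_deriv (a₀ a₁ E F p q : ℝ) :
    deriv (fun x => a₀ + a₁ * x + E * Real.exp (p * x) + F * Real.exp (q * x))
      = fun x => a₁ + E * p * Real.exp (p * x) + F * q * Real.exp (q * x) := by
  funext x
  exact (aux_hasDerivAt a₀ a₁ E F p q x).deriv


/-- Convexity of the candidate cost function near the lower barrier: with R the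
negative-balance branch of the expected discounted holding cost, and with coefficients
A, B determined by value-matching φ'(x_L) = −ℓ and smooth-pasting φ''(x_L) = 0, the
function φ = R + A·e^{βx} + B·e^{γx} satisfies φ'(x_L) = −ℓ, φ''(x_L) = 0,
φ''(x) = (č/ρ − ℓ)·β²γ²·(e^{γx_L+βx} − e^{βx_L+γx})/W for all x, hence φ'' ≥ 0 on
[x_L, ∞) and φ is convex there. -/
theorem candidate_cost_convex_lower
    (ρ σ μ β γ ccheck ell Ehat xL : ℝ)
    (hρ : 0 < ρ) (hσ : 0 < σ) (hβ : 0 < β) (hγ : γ < 0)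
    (hβroot : (1 / 2) * σ ^ 2 * β ^ 2 + μ * β - ρ = 0)
    (hγroot : (1 / 2) * σ ^ 2 * γ ^ 2 + μ * γ - ρ = 0)
    (hccheck : 0 < ccheck) (hell : 0 < ell) (hell' : ell ≤ ccheck / ρ) :
    let R : ℝ → ℝ := fun x => -(ccheck / ρ) * (x + μ / ρ) + Ehat * Real.exp (β * x)
    let W : ℝ := γ ^ 2 * Real.exp (γ * xL) * (β * Real.exp (β * xL))
        - γ * Real.exp (γ * xL) * (β ^ 2 * Real.exp (β * xL))
    let A : ℝ := (γ ^ 2 * Real.exp (γ * xL) * (-ell - deriv R xL)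
        + γ * Real.exp (γ * xL) * deriv (deriv R) xL) / W
    let B : ℝ := (-(β ^ 2 * Real.exp (β * xL)) * (-ell - deriv R xL)
        - β * Real.exp (β * xL) * deriv (deriv R) xL) / W
    let φ : ℝ → ℝ := fun x => R x + A * Real.exp (β * x) + B * Real.exp (γ * x)
    deriv φ xL = -ell ∧
    deriv (deriv φ) xL = 0 ∧
    (∀ x : ℝ, deriv (deriv φ) x
      = (ccheck / ρ - ell) * β ^ 2 * γ ^ 2 *
        (Real.exp (γ * xL + β * x) - Real.exp (β * xL + γ * x)) / W) ∧
    (∀ x : ℝ, xL ≤ x → 0 ≤ deriv (deriv φ) x) ∧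
    ConvexOn ℝ (Set.Ici xL) φ := by
  intro R W A B φ
  have hβγ : γ < β := hγ.trans hβ
  -- W positivity
  have hWform : W = (β * -γ) * (Real.exp (β * xL) * Real.exp (γ * xL)) * (β - γ) := by
    show γ ^ 2 * Real.exp (γ * xL) * (β * Real.exp (β * xL))
        - γ * Real.exp (γ * xL) * (β ^ 2 * Real.exp (β * xL)) = _
    ring
  have hWpos : 0 < W := by
    rw [hWform]
    have h1 : 0 < β * -γ := mul_pos hβ (by linarith)
    have h2 : 0 < Real.exp (β * xL) * Real.exp (γ * xL) :=
      mul_pos (Real.exp_pos _) (Real.exp_pos _)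
    have h3 : 0 < β - γ := by linarith
    positivity
  have hW0 : W ≠ 0 := ne_of_gt hWpos
  -- derivatives of R
  have hRform : R = fun x => (-(ccheck / ρ) * (μ / ρ)) + (-(ccheck / ρ)) * x
      + Ehat * Real.exp (β * x) + 0 * Real.exp (γ * x) := by
    funext x
    show -(ccheck / ρ) * (x + μ / ρ) + Ehat * Real.exp (β * x) = _
    ring
  have hRd : deriv R = fun x => (-(ccheck / ρ)) + 0 * x
      + (Ehat * β) * Real.exp (β * x) + (0 * γ) * Real.exp (γ * x) := by
    rw [hRform, aux_deriv]; funext x; ring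
  have hR1 : deriv R xL = -(ccheck / ρ) + Ehat * β * Real.exp (β * xL) := by
    rw [hRd]; ring
  have hR2 : deriv (deriv R) xL = Ehat * β ^ 2 * Real.exp (β * xL) := by
    rw [hRd, aux_deriv]; ring
  have hA : A = (γ ^ 2 * Real.exp (γ * xL) * (-ell - (-(ccheck / ρ) + Ehat * β * Real.exp (β * xL)))
      + γ * Real.exp (γ * xL) * (Ehat * β ^ 2 * Real.exp (β * xL))) / W := by
    show (γ ^ 2 * Real.exp (γ * xL) * (-ell - deriv R xL)
        + γ * Real.exp (γ * xL) * deriv (deriv R) xL) / W = _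
    rw [hR1, hR2]
  have hB : B = (-(β ^ 2 * Real.exp (β * xL)) * (-ell - (-(ccheck / ρ) + Ehat * β * Real.exp (β * xL)))
      - β * Real.exp (β * xL) * (Ehat * β ^ 2 * Real.exp (β * xL))) / W := by
    show (-(β ^ 2 * Real.exp (β * xL)) * (-ell - deriv R xL)
        - β * Real.exp (β * xL) * deriv (deriv R) xL) / W = _
    rw [hR1, hR2]
  have hWdef : W = γ ^ 2 * Real.exp (γ * xL) * (β * Real.exp (β * xL))
      - γ * Real.exp (γ * xL) * (β ^ 2 * Real.exp (β * xL)) := rfl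
  -- derivatives of φ
  have hφform : φ = fun x => (-(ccheck / ρ) * (μ / ρ)) + (-(ccheck / ρ)) * x
      + (Ehat + A) * Real.exp (β * x) + B * Real.exp (γ * x) := by
    funext x
    show (-(ccheck / ρ) * (x + μ / ρ) + Ehat * Real.exp (β * x))
        + A * Real.exp (β * x) + B * Real.exp (γ * x) = _
    ring
  have hφd : deriv φ = fun x => (-(ccheck / ρ)) + 0 * x
      + ((Ehat + A) * β) * Real.exp (β * x) + (B * γ) * Real.exp (γ * x) := by
    rw [hφform, aux_deriv]; funext x; ring
  have hφdd : deriv (deriv φ) = fun x =>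
      ((Ehat + A) * β * β) * Real.exp (β * x) + (B * γ * γ) * Real.exp (γ * x) := by
    rw [hφd, aux_deriv]; funext x; ring
  -- main second-derivative formula
  have key : ∀ x : ℝ, deriv (deriv φ) x
      = (ccheck / ρ - ell) * β ^ 2 * γ ^ 2 *
        (Real.exp (γ * xL + β * x) - Real.exp (β * xL + γ * x)) / W := by
    intro x
    rw [hφdd]
    simp only [Real.exp_add]
    rw [hA, hB, hWdef]
    have hn1 : γ - β ≠ 0 := (by linarith : γ - β < 0).ne
    have hn0 : γ ≠ 0 := hγ.ne
    have hn2 : -(γ * β) + γ ^ 2 ≠ 0 := (by nlinarith [mul_pos_of_neg_of_neg hγ (sub_neg.2 hβγ)] : 0 < -(γ * β) + γ ^ 2).ne'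
    have hn3 : -(β * γ) + γ ^ 2 ≠ 0 := (by nlinarith [mul_pos_of_neg_of_neg hγ (sub_neg.2 hβγ)] : 0 < -(β * γ) + γ ^ 2).ne'
    field_simp
    ring
  have keynn : ∀ x : ℝ, xL ≤ x → 0 ≤ deriv (deriv φ) x := by
    intro x hx
    rw [key x]
    apply div_nonneg _ (le_of_lt hWpos)
    apply mul_nonneg
    · have : 0 ≤ ccheck / ρ - ell := by linarith
      positivity
    · have hle : β * xL + γ * x ≤ γ * xL + β * x := by nlinarith
      simpa using Real.exp_le_exp.2 hle
  refine ⟨?_, ?_, key, keynn, ?_⟩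
  · -- value matching
    rw [hφd]
    show (-(ccheck / ρ)) + 0 * xL + ((Ehat + A) * β) * Real.exp (β * xL)
        + (B * γ) * Real.exp (γ * xL) = -ell
    rw [hA, hB, hWdef]
    have hn1 : γ - β ≠ 0 := (by linarith : γ - β < 0).ne
    have hn0 : γ ≠ 0 := hγ.ne
    have hn2 : -(γ * β) + γ ^ 2 ≠ 0 := (by nlinarith [mul_pos_of_neg_of_neg hγ (sub_neg.2 hβγ)] : 0 < -(γ * β) + γ ^ 2).ne'
    have hn3 : -(β * γ) + γ ^ 2 ≠ 0 := (by nlinarith [mul_pos_of_neg_of_neg hγ (sub_neg.2 hβγ)] : 0 < -(β * γ) + γ ^ 2).ne'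
    field_simp
    ring
  · rw [key xL]
    rw [add_comm (γ * xL) (β * xL)]
    simp
  · -- convexity
    have hφdiff : Differentiable ℝ φ := by
      rw [hφform]
      exact fun x => (aux_hasDerivAt _ _ _ _ _ _ x).differentiableAt
    have hφddiff : Differentiable ℝ (deriv φ) := by
      rw [hφd]
      exact fun x => (aux_hasDerivAt _ _ _ _ _ _ x).differentiableAt
    refine convexOn_of_deriv2_nonneg' (convex_Ici xL) hφdiff.differentiableOn
      hφddiff.differentiableOn ?_
    intro x hx
    have h2 : deriv^[2] φ x = deriv (deriv φ) x := rfl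
    rw [h2]
    exact keynn x hx
end

section
/- Let ρ, σ > 0, μ ∈ ℝ, let β > 0 and γ < 0 be the two roots of Q(χ) = (1/2)σ²χ² + μχ − ρ = 0, let č > 0, ℓ > 0, Ê ∈ ℝ and x_L ∈ ℝ. Set R(x) = −(č/ρ)(x + μ/ρ) + Ê·e^{βx}, W = γ²e^{γx_L}·βe^{βx_L} − γe^{γx_L}·β²e^{βx_L}, and B = [−β²e^{βx_L}(−ℓ − R'(x_L)) − βe^{βx_L}·R''(x_L)]/W. Then B = −(č/ρ − ℓ)·β²e^{βx_L}/W; since W > 0, it follows that B ≤ 0 whenever ℓ ≤ č/ρ, with B = 0 if and only if ℓ = č/ρ. -/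
lemma hasDerivAt_aexp (a b x : ℝ) :
    HasDerivAt (fun x : ℝ => a * Real.exp (b * x)) (a * (b * Real.exp (b * x))) x := by
  have : HasDerivAt (fun x : ℝ => Real.exp (b * x)) (Real.exp (b * x) * b) x :=
    (Real.hasDerivAt_exp (b * x)).comp x (by simpa using (hasDerivAt_id x).const_mul b)
  simpa [mul_comm] using this.const_mul a

/-- The coefficient B of the decreasing fundamental solution, determined by value-matching
and smooth-pasting at the lower barrier x_L, equals −(č/ρ − ℓ)·β²e^{βx_L}/W; since W > 0,
B ≤ 0 whenever ℓ ≤ č/ρ, with B = 0 iff ℓ = č/ρ. -/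
theorem coefficient_B_nonpositive
    (ρ σ μ β γ ccheck ell Ehat xL : ℝ)
    (hρ : 0 < ρ) (hσ : 0 < σ) (hβ : 0 < β) (hγ : γ < 0)
    (hβroot : (1 / 2) * σ ^ 2 * β ^ 2 + μ * β - ρ = 0)
    (hγroot : (1 / 2) * σ ^ 2 * γ ^ 2 + μ * γ - ρ = 0)
    (hccheck : 0 < ccheck) (hell : 0 < ell) :
    let R : ℝ → ℝ := fun x => -(ccheck / ρ) * (x + μ / ρ) + Ehat * Real.exp (β * x)
    let W : ℝ := γ ^ 2 * Real.exp (γ * xL) * (β * Real.exp (β * xL))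
        - γ * Real.exp (γ * xL) * (β ^ 2 * Real.exp (β * xL))
    let B : ℝ := (-(β ^ 2 * Real.exp (β * xL)) * (-ell - deriv R xL)
        - β * Real.exp (β * xL) * deriv (deriv R) xL) / W
    B = -(ccheck / ρ - ell) * β ^ 2 * Real.exp (β * xL) / W ∧
    0 < W ∧
    (ell ≤ ccheck / ρ → B ≤ 0) ∧
    (B = 0 ↔ ell = ccheck / ρ) := by
  intro R W B
  have hR1 : deriv R = fun x => -(ccheck / ρ) + Ehat * (β * Real.exp (β * x)) := by
    funext x
    have h1 : HasDerivAt (fun x : ℝ => -(ccheck / ρ) * (x + μ / ρ)) (-(ccheck / ρ)) x := by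
      simpa using ((hasDerivAt_id x).add_const (μ / ρ)).const_mul (-(ccheck / ρ))
    rw [show R = (fun x => -(ccheck / ρ * (x + μ / ρ)) + Ehat * Real.exp (β * x))
      from funext fun x => by ring]
    simpa [Pi.add_def] using (h1.add (hasDerivAt_aexp Ehat β x)).deriv
  have hR2 : deriv (deriv R) xL = Ehat * β * (β * Real.exp (β * xL)) := by
    rw [hR1]
    have h2 : HasDerivAt (fun x : ℝ => -(ccheck / ρ) + Ehat * (β * Real.exp (β * x)))
        (Ehat * β * (β * Real.exp (β * xL))) xL := by
      have := (hasDerivAt_aexp (Ehat * β) β xL).const_add (-(ccheck / ρ))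
      have heq : (fun x : ℝ => -(ccheck / ρ) + Ehat * β * Real.exp (β * x))
          = fun x : ℝ => -(ccheck / ρ) + Ehat * (β * Real.exp (β * x)) := by
        funext x; ring
      rw [heq] at this
      exact this
    exact h2.deriv
  have hR1' : deriv R xL = -(ccheck / ρ) + Ehat * (β * Real.exp (β * xL)) := by rw [hR1]
  have hBeq : B = -(ccheck / ρ - ell) * β ^ 2 * Real.exp (β * xL) / W := by
    show (-(β ^ 2 * Real.exp (β * xL)) * (-ell - deriv R xL)
        - β * Real.exp (β * xL) * deriv (deriv R) xL) / W = _
    rw [hR1', hR2]; ring_nf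
  have hW : 0 < W := by
    have h : W = β * Real.exp (γ * xL) * Real.exp (β * xL) * (γ * (γ - β)) := by
      show γ ^ 2 * Real.exp (γ * xL) * (β * Real.exp (β * xL))
        - γ * Real.exp (γ * xL) * (β ^ 2 * Real.exp (β * xL)) = _
      ring
    rw [h]
    have : 0 < γ * (γ - β) := mul_pos_of_neg_of_neg hγ (by linarith)
    positivity
  refine ⟨hBeq, hW, ?_, ?_⟩
  · intro hle
    rw [hBeq]
    apply div_nonpos_of_nonpos_of_nonneg _ hW.le
    have : 0 < β ^ 2 * Real.exp (β * xL) := by positivity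
    nlinarith [this]
  · rw [hBeq, div_eq_zero_iff]
    have hpos : 0 < β ^ 2 * Real.exp (β * xL) := by positivity
    constructor
    · rintro (h | h)
      · rw [mul_assoc] at h
        rcases mul_eq_zero.mp h with h' | h'
        · linarith [neg_eq_zero.mp h']
        · exact absurd h' hpos.ne'
      · exact absurd h hW.ne'
    · intro h; left; rw [h]; ring
end
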